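/- Let 1 ≤ p < ∞ and let f : ℝ → ℝ be 2π-periodic and Henstock–Kurzweil integrable on [−π,π], with Poisson integral u_r(θ) = P[f](re^{iθ}). Then ‖u_r‖_p = o(1/(1−r)) as r → 1⁻; that is, (1−r)·(∫_{−π}^{π} |u_r(θ)|^p dθ)^{1/p} → 0 as r → 1⁻. -/

import Mathlib

/-!
Fix a continuous `g` whose primitive is uniformly within `ε` of the (continuous) primitive of `f`
on `[-π, π]`; such `g` exist by Weierstrass approximation. Against the kernel `P_r ≥ 0`, which has
integral `1`, the continuous part contributes at most `sup |g|`. For `h = f - g`, Abel summation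
on Riemann sums bounds `|∫ h P_r(· - θ)|` by `ε (sup P_r + Var P_r) ≤ 3ε / (π (1 - r))`.
Hence `(1 - r) |u_r| ≤ (1 - r) sup |g| + ε` uniformly in `θ`, and the same bound passes to
`‖u_r‖_p ≤ (2π)^{1/p} sup |u_r|`.
-/

open Real Filter MeasureTheory Set Topology

noncomputable section

/-- `f` has Henstock–Kurzweil integral `I` on `[a,b]`: for every `ε > 0` there is a
gauge `δ` such that every `δ`-fine tagged partition of `[a,b]` has Riemann sum
within `ε` of `I`. -/
def HKIntegralEq (f : ℝ → ℝ) (a b I : ℝ) : Prop :=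
  ∀ ε > 0, ∃ δ : ℝ → ℝ, (∀ x, 0 < δ x) ∧
    ∀ (n : ℕ) (t ξ : ℕ → ℝ),
      t 0 = a → t n = b →
      (∀ i < n, t i ≤ t (i + 1)) →
      (∀ i < n, t i ≤ ξ i ∧ ξ i ≤ t (i + 1)) →
      (∀ i < n, ξ i - δ (ξ i) < t i ∧ t (i + 1) < ξ i + δ (ξ i)) →
      |(∑ i ∈ Finset.range n, f (ξ i) * (t (i + 1) - t i)) - I| < ε

/-- `f` is Henstock–Kurzweil integrable on `[a,b]`. -/
def HKIntegrable (f : ℝ → ℝ) (a b : ℝ) : Prop := ∃ I, HKIntegralEq f a b I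

open Classical in
/-- The Henstock–Kurzweil integral of `f` on `[a,b]` (junk value `0` if not integrable). -/
def hkIntegral (f : ℝ → ℝ) (a b : ℝ) : ℝ :=
  if h : HKIntegrable f a b then h.choose else 0

/-- The Poisson kernel for the unit disc. -/
def poissonKernelR (r θ : ℝ) : ℝ :=
  (1 - r ^ 2) / (2 * π * (1 - 2 * r * Real.cos θ + r ^ 2))

/-- The Poisson integral of `f`, evaluated at the point `r e^{iθ}` of the unit disc. -/
def poissonIntegral (f : ℝ → ℝ) (r θ : ℝ) : ℝ :=
  hkIntegral (fun φ => f φ * poissonKernelR r (φ - θ)) (-π) π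

/-- The Alexiewicz norm over the circle: the supremum of `|∫_I g|` over intervals `I`
of length at most `2π`. -/
def alexNorm (g : ℝ → ℝ) : ℝ :=
  sSup {v | ∃ a b : ℝ, a ≤ b ∧ b - a ≤ 2 * π ∧ v = |hkIntegral g a b|}

/-- The `L^p` norm on `[-π,π]`. -/
def lpNorm (p : ℝ) (g : ℝ → ℝ) : ℝ :=
  (∫ θ in (-π)..π, |g θ| ^ p) ^ (1 / p)

def riemannSum (f : ℝ → ℝ) (n : ℕ) (t ξ : ℕ → ℝ) : ℝ :=
  ∑ i ∈ Finset.range n, f (ξ i) * (t (i + 1) - t i)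

structure IsFinePartition (a b : ℝ) (δ : ℝ → ℝ) (n : ℕ) (t ξ : ℕ → ℝ) : Prop where
  first : t 0 = a
  last : t n = b
  le_succ : ∀ i < n, t i ≤ t (i + 1)
  tag_mem : ∀ i < n, t i ≤ ξ i ∧ ξ i ≤ t (i + 1)
  fine : ∀ i < n, ξ i - δ (ξ i) < t i ∧ t (i + 1) < ξ i + δ (ξ i)

theorem hkIntegralEq_iff {f : ℝ → ℝ} {a b I : ℝ} :
    HKIntegralEq f a b I ↔ ∀ ε > 0, ∃ δ : ℝ → ℝ, (∀ x, 0 < δ x) ∧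
      ∀ n t ξ, IsFinePartition a b δ n t ξ → |riemannSum f n t ξ - I| < ε :=
  forall₂_congr fun _ _ => exists_congr fun _ => and_congr_right fun _ =>
    ⟨fun H n t ξ h => H n t ξ h.1 h.2 h.3 h.4 h.5, fun H n t ξ h₁ h₂ h₃ h₄ h₅ =>
      H n t ξ ⟨h₁, h₂, h₃, h₄, h₅⟩⟩

namespace IsFinePartition

variable {a b : ℝ} {δ : ℝ → ℝ} {n : ℕ} {t ξ : ℕ → ℝ}

theorem mono_gauge (h : IsFinePartition a b δ n t ξ) {δ' : ℝ → ℝ} (hδ : ∀ x, δ x ≤ δ' x) :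
    IsFinePartition a b δ' n t ξ :=
  { h with
    fine := fun i hi => ⟨by linarith [(h.fine i hi).1, hδ (ξ i)],
      by linarith [(h.fine i hi).2, hδ (ξ i)]⟩ }

theorem le_of_le (h : IsFinePartition a b δ n t ξ) {i j : ℕ} (hij : i ≤ j) (hj : j ≤ n) :
    t i ≤ t j := by
  induction j, hij using Nat.le_induction with
  | base => exact le_rfl
  | succ k _ ih => exact (ih (by omega)).trans (h.le_succ k (by omega))

theorem mem_Icc (h : IsFinePartition a b δ n t ξ) {i : ℕ} (hi : i ≤ n) : t i ∈ Icc a b :=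
  ⟨h.first ▸ h.le_of_le (Nat.zero_le i) hi, h.last ▸ h.le_of_le hi le_rfl⟩

theorem tag_mem_Icc (h : IsFinePartition a b δ n t ξ) {i : ℕ} (hi : i < n) : ξ i ∈ Icc a b :=
  ⟨(h.mem_Icc hi.le).1.trans (h.tag_mem i hi).1, (h.tag_mem i hi).2.trans (h.mem_Icc hi).2⟩

theorem tag_le_tag (h : IsFinePartition a b δ n t ξ) {i j : ℕ} (hij : i ≤ j) (hj : j < n) :
    ξ i ≤ ξ j := by
  rcases hij.eq_or_lt with rfl | hij
  · exact le_rfl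
  · exact ((h.tag_mem i (hij.trans hj)).2.trans (h.le_of_le hij hj.le)).trans (h.tag_mem j hj).1

theorem le (h : IsFinePartition a b δ n t ξ) : a ≤ b :=
  (h.mem_Icc le_rfl).1.trans (h.mem_Icc le_rfl).2

theorem take (h : IsFinePartition a b δ n t ξ) {k : ℕ} (hk : k ≤ n) :
    IsFinePartition a (t k) δ k t ξ :=
  ⟨h.first, rfl, fun i hi => h.le_succ i (by omega), fun i hi => h.tag_mem i (by omega),
    fun i hi => h.fine i (by omega)⟩

end IsFinePartition

theorem isFinePartition_zero (a : ℝ) (δ : ℝ → ℝ) (ξ : ℕ → ℝ) :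
    IsFinePartition a a δ 0 (fun _ => a) ξ :=
  ⟨rfl, rfl, fun _ h => absurd h (Nat.not_lt_zero _), fun _ h => absurd h (Nat.not_lt_zero _),
    fun _ h => absurd h (Nat.not_lt_zero _)⟩

theorem isFinePartition_single {u v x : ℝ} {δ : ℝ → ℝ} (hx : x ∈ Icc u v) (hu : x - δ x < u)
    (hv : v < x + δ x) :
    IsFinePartition u v δ 1 (fun i => if i = 0 then u else v) (fun _ => x) := by
  refine ⟨rfl, rfl, ?_, ?_, ?_⟩ <;> intro i hi <;> obtain rfl : i = 0 := by omega
  exacts [hx.1.trans hx.2, hx, ⟨hu, hv⟩]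

theorem riemannSum_single (f : ℝ → ℝ) (u v x : ℝ) :
    riemannSum f 1 (fun i => if i = 0 then u else v) (fun _ => x) = f x * (v - u) := by
  simp [riemannSum]

def concatSeq (n : ℕ) (t s : ℕ → ℝ) : ℕ → ℝ := fun i => if i < n then t i else s (i - n)

theorem concatSeq_add {n : ℕ} {t s : ℕ → ℝ} (j : ℕ) : concatSeq n t s (n + j) = s j := by
  simp [concatSeq]

theorem concatSeq_of_lt {n : ℕ} {t s : ℕ → ℝ} {i : ℕ} (hi : i < n) : concatSeq n t s i = t i := by
  simp [concatSeq, hi]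

theorem concatSeq_of_le {n : ℕ} {t s : ℕ → ℝ} (hts : t n = s 0) {i : ℕ} (hi : i ≤ n) :
    concatSeq n t s i = t i := by
  rcases hi.lt_or_eq with hi | rfl
  · exact concatSeq_of_lt hi
  · simpa [concatSeq] using hts.symm

theorem riemannSum_concatSeq_of_le (f : ℝ → ℝ) {n : ℕ} {t ξ s σ : ℕ → ℝ} (hts : t n = s 0) {k : ℕ}
    (hk : k ≤ n) : riemannSum f k (concatSeq n t s) (concatSeq n ξ σ) = riemannSum f k t ξ :=
  Finset.sum_congr rfl fun i hi => by
    rw [Finset.mem_range] at hi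
    rw [concatSeq_of_lt (t := t) (i := i) (by omega), concatSeq_of_lt (t := ξ) (by omega),
      concatSeq_of_le hts (by omega : i + 1 ≤ n)]

theorem riemannSum_concatSeq (f : ℝ → ℝ) {n : ℕ} {t ξ s σ : ℕ → ℝ} (hts : t n = s 0) (k : ℕ) :
    riemannSum f (n + k) (concatSeq n t s) (concatSeq n ξ σ) =
      riemannSum f n t ξ + riemannSum f k s σ := by
  rw [riemannSum, Finset.sum_range_add, ← riemannSum, riemannSum_concatSeq_of_le f hts le_rfl]
  congr 1
  refine Finset.sum_congr rfl fun j _ => ?_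
  rw [add_assoc, concatSeq_add, concatSeq_add, concatSeq_add]

theorem IsFinePartition.append {a b c : ℝ} {δ : ℝ → ℝ} {n m : ℕ} {t ξ s σ : ℕ → ℝ}
    (h₁ : IsFinePartition a c δ n t ξ) (h₂ : IsFinePartition c b δ m s σ) :
    IsFinePartition a b δ (n + m) (concatSeq n t s) (concatSeq n ξ σ) := by
  have hts : t n = s 0 := h₁.last.trans h₂.first.symm
  have key : ∀ {P : ℝ → ℝ → ℝ → Prop}, (∀ i < n, P (t i) (t (i + 1)) (ξ i)) →
      (∀ j < m, P (s j) (s (j + 1)) (σ j)) → ∀ i < n + m,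
        P (concatSeq n t s i) (concatSeq n t s (i + 1)) (concatSeq n ξ σ i) := by
    intro P h₁ h₂ i hi
    rcases Nat.lt_or_ge i n with hin | hin
    · rw [concatSeq_of_lt hin, concatSeq_of_lt hin, concatSeq_of_le hts hin]
      exact h₁ i hin
    · obtain ⟨j, rfl⟩ := Nat.exists_eq_add_of_le hin
      rw [add_assoc, concatSeq_add, concatSeq_add, concatSeq_add]
      exact h₂ j (by omega)
  refine ⟨?_, ?_, key (P := fun u v _ => u ≤ v) h₁.le_succ h₂.le_succ,
    key (P := fun u v x => u ≤ x ∧ x ≤ v) h₁.tag_mem h₂.tag_mem,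
    key (P := fun u v x => x - δ x < u ∧ v < x + δ x) h₁.fine h₂.fine⟩
  · rw [concatSeq_of_le hts (Nat.zero_le n), h₁.first]
  · rw [concatSeq_add, h₂.last]

theorem IsFinePartition.riemannSum_append (f : ℝ → ℝ) {a b c : ℝ} {δ : ℝ → ℝ} {n m : ℕ}
    {t ξ s σ : ℕ → ℝ} (h₁ : IsFinePartition a c δ n t ξ) (h₂ : IsFinePartition c b δ m s σ) :
    riemannSum f (n + m) (concatSeq n t s) (concatSeq n ξ σ) =
      riemannSum f n t ξ + riemannSum f m s σ :=
  riemannSum_concatSeq f (h₁.last.trans h₂.first.symm) m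

theorem exists_isFinePartition {δ : ℝ → ℝ} (hδ : ∀ x, 0 < δ x) {a b : ℝ} (hab : a ≤ b) :
    ∃ n t ξ, IsFinePartition a b δ n t ξ := by
  set S := {x | x ∈ Icc a b ∧ ∃ n t ξ, IsFinePartition a x δ n t ξ}
  have haS : a ∈ S := ⟨⟨le_rfl, hab⟩, 0, _, fun _ => a, isFinePartition_zero a δ _⟩
  have hbdd : BddAbove S := ⟨b, fun x hx => hx.1.2⟩
  set c := sSup S
  have hcb : c ≤ b := csSup_le ⟨a, haS⟩ fun x hx => hx.1.2
  obtain ⟨x, hxS, hxc⟩ := exists_lt_of_lt_csSup ⟨a, haS⟩ (sub_lt_self c (hδ c))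
  obtain ⟨n, t, ξ, hx⟩ := hxS.2
  have hc : IsFinePartition a c δ _ _ _ := hx.append (isFinePartition_single
    ⟨le_csSup hbdd hxS, le_rfl⟩ hxc (lt_add_of_pos_right c (hδ c)))
  obtain hcb | hcb := hcb.eq_or_lt
  · exact hcb ▸ ⟨_, _, _, hc⟩
  set d := min b (c + δ c / 2)
  have hcd : c < d := lt_min hcb (by linarith [hδ c])
  have hd : IsFinePartition a d δ _ _ _ := hc.append (isFinePartition_single
    ⟨le_rfl, hcd.le⟩ (sub_lt_self c (hδ c)) (by linarith [min_le_right b (c + δ c / 2), hδ c]))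
  exact absurd (le_csSup hbdd ⟨⟨hd.le, min_le_left _ _⟩, _, _, _, hd⟩) hcd.not_ge

section Basic

variable {f g : ℝ → ℝ} {a b I J : ℝ}

theorem exists_isFinePartition₂ {δ₁ δ₂ : ℝ → ℝ} (h₁ : ∀ x, 0 < δ₁ x) (h₂ : ∀ x, 0 < δ₂ x)
    (hab : a ≤ b) :
    ∃ n t ξ, IsFinePartition a b δ₁ n t ξ ∧ IsFinePartition a b δ₂ n t ξ := by
  obtain ⟨n, t, ξ, h⟩ := exists_isFinePartition (fun x => lt_min (h₁ x) (h₂ x)) hab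
  exact ⟨n, t, ξ, h.mono_gauge fun _ => min_le_left _ _, h.mono_gauge fun _ => min_le_right _ _⟩

theorem HKIntegralEq.unique (hab : a ≤ b) (hI : HKIntegralEq f a b I)
    (hJ : HKIntegralEq f a b J) : I = J := by
  refine eq_of_forall_dist_le fun ε hε => ?_
  obtain ⟨δ₁, hδ₁, H₁⟩ := hkIntegralEq_iff.mp hI (ε / 2) (half_pos hε)
  obtain ⟨δ₂, hδ₂, H₂⟩ := hkIntegralEq_iff.mp hJ (ε / 2) (half_pos hε)
  obtain ⟨n, t, ξ, h₁, h₂⟩ := exists_isFinePartition₂ hδ₁ hδ₂ hab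
  rw [Real.dist_eq]
  linarith [abs_sub_le I (riemannSum f n t ξ) J, abs_sub_comm I (riemannSum f n t ξ),
    H₁ n t ξ h₁, H₂ n t ξ h₂]

theorem HKIntegrable.hkIntegralEq (h : HKIntegrable f a b) :
    HKIntegralEq f a b (hkIntegral f a b) := by
  rw [hkIntegral, dif_pos h]
  exact h.choose_spec

theorem HKIntegralEq.hkIntegral_eq (hab : a ≤ b) (h : HKIntegralEq f a b I) :
    hkIntegral f a b = I :=
  (HKIntegrable.hkIntegralEq ⟨I, h⟩).unique hab h

theorem riemannSum_sub (f g : ℝ → ℝ) (n : ℕ) (t ξ : ℕ → ℝ) :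
    riemannSum (fun x => f x - g x) n t ξ = riemannSum f n t ξ - riemannSum g n t ξ := by
  simp only [riemannSum, sub_mul, Finset.sum_sub_distrib]

theorem HKIntegralEq.sub (hf : HKIntegralEq f a b I) (hg : HKIntegralEq g a b J) :
    HKIntegralEq (fun x => f x - g x) a b (I - J) := by
  refine hkIntegralEq_iff.mpr fun ε hε => ?_
  obtain ⟨δ₁, hδ₁, H₁⟩ := hkIntegralEq_iff.mp hf (ε / 2) (half_pos hε)
  obtain ⟨δ₂, hδ₂, H₂⟩ := hkIntegralEq_iff.mp hg (ε / 2) (half_pos hε)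
  refine ⟨fun x => min (δ₁ x) (δ₂ x), fun x => lt_min (hδ₁ x) (hδ₂ x), fun n t ξ h => ?_⟩
  have e₁ := H₁ n t ξ (h.mono_gauge fun _ => min_le_left _ _)
  have e₂ := H₂ n t ξ (h.mono_gauge fun _ => min_le_right _ _)
  rw [riemannSum_sub]
  calc |riemannSum f n t ξ - riemannSum g n t ξ - (I - J)|
      = |(riemannSum f n t ξ - I) - (riemannSum g n t ξ - J)| := by ring_nf
    _ ≤ |riemannSum f n t ξ - I| + |riemannSum g n t ξ - J| := abs_sub _ _
    _ < ε := by linarith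

end Basic

section Cauchy

variable {f : ℝ → ℝ} {a b : ℝ}

theorem hkIntegrable_of_cauchy (hab : a ≤ b)
    (H : ∀ ε > 0, ∃ δ : ℝ → ℝ, (∀ x, 0 < δ x) ∧ ∀ n t ξ n' t' ξ',
      IsFinePartition a b δ n t ξ → IsFinePartition a b δ n' t' ξ' →
        |riemannSum f n t ξ - riemannSum f n' t' ξ'| ≤ ε) :
    HKIntegrable f a b := by
  choose δ hδ hδf using fun k : ℕ => H (1 / (k + 1)) Nat.one_div_pos_of_nat
  -- pointwise minimum of the first `k + 1` gauges, so that fineness is inherited downwards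
  set δm : ℕ → ℝ → ℝ := fun k x => (Finset.range (k + 1)).inf' Finset.nonempty_range_add_one
    fun j => δ j x
  have hδm : ∀ k x, 0 < δm k x := fun k x => (Finset.lt_inf'_iff _).mpr fun j _ => hδ j x
  have hδm_le : ∀ {k j}, j ≤ k → ∀ x, δm k x ≤ δ j x := fun hjk x =>
    Finset.inf'_le _ (Finset.mem_range.mpr (Nat.lt_succ_of_le hjk))
  choose n t ξ hP using fun k => exists_isFinePartition (hδm k) hab
  set u : ℕ → ℝ := fun k => riemannSum f (n k) (t k) (ξ k)
  have hu : ∀ {N k : ℕ}, N ≤ k → ∀ n' t' ξ', IsFinePartition a b (δm N) n' t' ξ' →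
      |riemannSum f n' t' ξ' - u k| ≤ 1 / (N + 1) := fun {N} _ hk n' t' ξ' h' =>
    hδf N _ _ _ _ _ _ (h'.mono_gauge (hδm_le le_rfl)) ((hP _).mono_gauge (hδm_le hk))
  have hcauchy : CauchySeq u := by
    refine cauchySeq_of_le_tendsto_0 (fun N : ℕ => 1 / ((N : ℝ) + 1)) (fun k l N hk hl => ?_)
      tendsto_one_div_add_atTop_nhds_zero_nat
    exact hδf N _ _ _ _ _ _ ((hP k).mono_gauge (hδm_le hk)) ((hP l).mono_gauge (hδm_le hl))
  obtain ⟨I, hI⟩ := cauchySeq_tendsto_of_complete hcauchy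
  refine ⟨I, hkIntegralEq_iff.mpr fun ε hε => ?_⟩
  obtain ⟨N, hN⟩ := exists_nat_one_div_lt hε
  refine ⟨δm N, hδm N, fun n' t' ξ' h' => lt_of_le_of_lt ?_ hN⟩
  exact le_of_tendsto (tendsto_const_nhds.sub hI).abs
    (eventually_atTop.mpr ⟨N, fun k hk => hu hk n' t' ξ' h'⟩)

theorem HKIntegrable.mono {c d : ℝ} (h : HKIntegrable f a b) (hac : a ≤ c) (hcd : c ≤ d)
    (hdb : d ≤ b) : HKIntegrable f c d := by
  obtain ⟨I, hI⟩ := h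
  refine hkIntegrable_of_cauchy hcd fun ε hε => ?_
  obtain ⟨δ, hδ, H⟩ := hkIntegralEq_iff.mp hI (ε / 2) (half_pos hε)
  obtain ⟨_, _, _, hL⟩ := exists_isFinePartition hδ hac
  obtain ⟨_, _, _, hR⟩ := exists_isFinePartition hδ hdb
  refine ⟨δ, hδ, fun n t ξ n' t' ξ' hP hP' => ?_⟩
  have e := H _ _ _ ((hL.append hP).append hR)
  have e' := H _ _ _ ((hL.append hP').append hR)
  rw [(hL.append hP).riemannSum_append f hR, hL.riemannSum_append f hP] at e
  rw [(hL.append hP').riemannSum_append f hR, hL.riemannSum_append f hP'] at e'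
  rw [abs_lt] at e e'
  rw [abs_le]
  constructor <;> linarith

end Cauchy

section Primitive

variable {f : ℝ → ℝ} {a b : ℝ}

theorem hkIntegral_add_adjacent {c : ℝ} (hf : HKIntegrable f a b) (hac : a ≤ c) (hcb : c ≤ b) :
    hkIntegral f a c + hkIntegral f c b = hkIntegral f a b := by
  refine eq_of_forall_dist_le fun ε hε => ?_
  have hε3 : 0 < ε / 3 := by positivity
  obtain ⟨δ, hδ, H⟩ := hkIntegralEq_iff.mp hf.hkIntegralEq _ hε3
  obtain ⟨δ₁, hδ₁, H₁⟩ := hkIntegralEq_iff.mp (hf.mono le_rfl hac hcb).hkIntegralEq _ hε3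
  obtain ⟨δ₂, hδ₂, H₂⟩ := hkIntegralEq_iff.mp (hf.mono hac hcb le_rfl).hkIntegralEq _ hε3
  obtain ⟨n, t, ξ, hP, hP₁⟩ := exists_isFinePartition₂ hδ hδ₁ hac
  obtain ⟨m, s, σ, hQ, hQ₂⟩ := exists_isFinePartition₂ hδ hδ₂ hcb
  have e := H _ _ _ (hP.append hQ)
  rw [hP.riemannSum_append f hQ] at e
  have e₁ := H₁ n t ξ hP₁
  have e₂ := H₂ m s σ hQ₂
  rw [abs_lt] at e e₁ e₂
  rw [Real.dist_eq, abs_le]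
  constructor <;> linarith

variable {δ : ℝ → ℝ} {ε : ℝ}

theorem abs_riemannSum_sub_hkIntegral_le (hf : HKIntegrable f a b) (hδ : ∀ x, 0 < δ x)
    (H : ∀ n t ξ, IsFinePartition a b δ n t ξ → |riemannSum f n t ξ - hkIntegral f a b| < ε)
    {n : ℕ} {t ξ : ℕ → ℝ} (hP : IsFinePartition a b δ n t ξ) {k : ℕ} (hk : k ≤ n) :
    |riemannSum f k t ξ - hkIntegral f a (t k)| ≤ ε := by
  obtain ⟨hak, hkb⟩ := hP.mem_Icc hk
  refine le_of_forall_pos_lt_add fun η hη => ?_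
  obtain ⟨δ₂, hδ₂, H₂⟩ := hkIntegralEq_iff.mp (hf.mono hak hkb le_rfl).hkIntegralEq η hη
  obtain ⟨m, s, σ, hQ, hQ₂⟩ := exists_isFinePartition₂ hδ hδ₂ hkb
  have e := H _ _ _ ((hP.take hk).append hQ)
  rw [(hP.take hk).riemannSum_append f hQ, ← hkIntegral_add_adjacent hf hak hkb] at e
  have e₂ := H₂ m s σ hQ₂
  rw [abs_lt] at e e₂ ⊢
  constructor <;> linarith

/-- The Saks–Henstock lemma for a single `δ`-fine tagged interval `([u, v], x)`. -/
theorem abs_hkIntegral_sub_sub_mul_le (hf : HKIntegrable f a b) (hδ : ∀ x, 0 < δ x)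
    (H : ∀ n t ξ, IsFinePartition a b δ n t ξ → |riemannSum f n t ξ - hkIntegral f a b| < ε)
    {u x v : ℝ} (hau : a ≤ u) (hx : x ∈ Icc u v) (hvb : v ≤ b) (hu : x - δ x < u)
    (hv : v < x + δ x) :
    |hkIntegral f a v - hkIntegral f a u - f x * (v - u)| ≤ 2 * ε := by
  obtain ⟨nL, tL, ξL, hL⟩ := exists_isFinePartition hδ hau
  obtain ⟨nR, tR, ξR, hR⟩ := exists_isFinePartition hδ hvb
  have hS := isFinePartition_single hx hu hv
  have hP := (hL.append hS).append hR
  have htL : tL nL = u := hL.last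
  have htS : (fun i : ℕ => if i = 0 then u else v) 0 = u := rfl
  have htR : concatSeq nL tL (fun i => if i = 0 then u else v) (nL + 1) = tR 0 := by
    rw [concatSeq_add, hR.first]; rfl
  -- the initial segments of `L ++ ([u, v], x) ++ R` of lengths `nL` and `nL + 1` end at `u`, `v`
  have eu := abs_riemannSum_sub_hkIntegral_le hf hδ H hP (k := nL) (by omega)
  have ev := abs_riemannSum_sub_hkIntegral_le hf hδ H hP (k := nL + 1) (by omega)
  rw [riemannSum_concatSeq_of_le f htR (by omega), riemannSum_concatSeq_of_le f (htL.trans htS.symm)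
    le_rfl, concatSeq_of_le htR (by omega), concatSeq_of_le (htL.trans htS.symm) le_rfl, htL] at eu
  rw [riemannSum_concatSeq_of_le f htR le_rfl, riemannSum_concatSeq f (htL.trans htS.symm) 1,
    riemannSum_single, concatSeq_of_le htR le_rfl, concatSeq_add] at ev
  rw [abs_le] at eu ev ⊢
  constructor <;> simp only [if_neg one_ne_zero] at ev <;> linarith

theorem continuousOn_hkIntegral (hf : HKIntegrable f a b) :
    ContinuousOn (fun c => hkIntegral f a c) (Icc a b) := by
  intro x hx
  rw [Metric.continuousWithinAt_iff]
  intro ε hε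
  obtain ⟨δ, hδ, H⟩ := hkIntegralEq_iff.mp hf.hkIntegralEq (ε / 4) (by positivity)
  have hM : 0 < |f x| + 1 := by positivity
  refine ⟨min (δ x) (ε / 2 / (|f x| + 1)), lt_min (hδ x) (by positivity), fun y hy hyx => ?_⟩
  have key : ∀ u v, a ≤ u → x ∈ Icc u v → v ≤ b → v - u < min (δ x) (ε / 2 / (|f x| + 1)) →
      |hkIntegral f a v - hkIntegral f a u| < ε := by
    intro u v hau hxuv hvb huv
    have e := abs_hkIntegral_sub_sub_mul_le hf hδ H hau hxuv hvb
      (by linarith [min_le_left (δ x) (ε / 2 / (|f x| + 1)), hxuv.2])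
      (by linarith [min_le_left (δ x) (ε / 2 / (|f x| + 1)), hxuv.1])
    have hfx : |f x * (v - u)| < ε / 2 := by
      rw [abs_mul, abs_of_nonneg (a := v - u) (by linarith [hxuv.1, hxuv.2])]
      calc |f x| * (v - u) ≤ |f x| * (ε / 2 / (|f x| + 1)) :=
            mul_le_mul_of_nonneg_left (huv.le.trans (min_le_right _ _)) (abs_nonneg _)
        _ < ε / 2 := by rw [mul_div_assoc', div_lt_iff₀ hM]; nlinarith
    have := abs_add_le (hkIntegral f a v - hkIntegral f a u - f x * (v - u)) (f x * (v - u))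
    rw [sub_add_cancel] at this
    linarith
  rw [Real.dist_eq] at hyx ⊢
  rcases le_total y x with hyx' | hxy
  · rw [abs_sub_comm]
    refine key y x hy.1 ⟨hyx', le_rfl⟩ hx.2 ?_
    rw [abs_sub_comm, abs_of_nonneg (by linarith)] at hyx
    linarith
  · exact key x y hx.1 ⟨le_rfl, hxy⟩ hy.2 (by rw [abs_of_nonneg (by linarith)] at hyx; linarith)

end Primitive

theorem ContinuousOn.hkIntegralEq_intervalIntegral {g : ℝ → ℝ} {a b : ℝ}
    (hg : ContinuousOn g (Icc a b)) (hab : a ≤ b) :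
    HKIntegralEq g a b (∫ x in a..b, g x) := by
  refine hkIntegralEq_iff.mpr fun ε hε => ?_
  set ε' := ε / (b - a + 1)
  have hε' : 0 < ε' := div_pos hε (by linarith)
  obtain ⟨η, hη, Huc⟩ := Metric.uniformContinuousOn_iff.mp
    (isCompact_Icc.uniformContinuousOn_of_continuous hg) ε' hε'
  refine ⟨fun _ => η / 2, fun _ => half_pos hη, fun n t ξ hP => ?_⟩
  have hint : ∀ i < n, IntervalIntegrable g volume (t i) (t (i + 1)) := fun i hi =>
    (hg.mono (Icc_subset_Icc (hP.mem_Icc hi.le).1 (hP.mem_Icc hi).2)).intervalIntegrable_of_Icc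
      (hP.le_succ i hi)
  have hterm : ∀ i ∈ Finset.range n,
      |g (ξ i) * (t (i + 1) - t i) - ∫ x in t i..t (i + 1), g x| ≤ ε' * (t (i + 1) - t i) := by
    intro i hi
    rw [Finset.mem_range] at hi
    obtain ⟨htag₁, htag₂⟩ := hP.tag_mem i hi
    obtain ⟨hfine₁, hfine₂⟩ := hP.fine i hi
    have hle := hP.le_succ i hi
    have hconst : g (ξ i) * (t (i + 1) - t i) = ∫ _ in t i..t (i + 1), g (ξ i) := by
      rw [intervalIntegral.integral_const, smul_eq_mul, mul_comm]
    rw [hconst, ← intervalIntegral.integral_sub intervalIntegrable_const (hint i hi),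
      ← Real.norm_eq_abs, ← abs_of_nonneg (sub_nonneg.mpr hle)]
    refine intervalIntegral.norm_integral_le_of_norm_le_const fun x hx => ?_
    rw [uIoc_of_le hle] at hx
    have hxI : x ∈ Icc a b :=
      ⟨(hP.mem_Icc hi.le).1.trans hx.1.le, hx.2.trans (hP.mem_Icc hi).2⟩
    refine (Huc (ξ i) (hP.tag_mem_Icc hi) x hxI ?_).le
    rw [Real.dist_eq, abs_lt]
    constructor <;> linarith [hx.1, hx.2]
  have hsplit := intervalIntegral.sum_integral_adjacent_intervals hint
  rw [hP.first, hP.last] at hsplit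
  rw [← hsplit]
  calc |riemannSum g n t ξ - ∑ i ∈ Finset.range n, ∫ x in t i..t (i + 1), g x|
      ≤ ∑ i ∈ Finset.range n, ε' * (t (i + 1) - t i) := by
        rw [riemannSum, ← Finset.sum_sub_distrib]
        exact (Finset.abs_sum_le_sum_abs _ _).trans (Finset.sum_le_sum hterm)
    _ = ε' * (b - a) := by rw [← Finset.mul_sum, Finset.sum_range_sub, hP.first, hP.last]
    _ < ε := by
        rw [div_mul_eq_mul_div, div_lt_iff₀ (by linarith)]
        nlinarith

theorem abs_sum_mul_le_of_abs_partialSum_le (γ β : ℕ → ℝ) {n : ℕ} {B : ℝ}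
    (hB : ∀ k ≤ n, |∑ j ∈ Finset.range k, β j| ≤ B) :
    |∑ i ∈ Finset.range n, γ i * β i| ≤
      B * (|γ (n - 1)| + ∑ i ∈ Finset.range (n - 1), |γ (i + 1) - γ i|) := by
  have hB0 : 0 ≤ B := (abs_nonneg _).trans (hB 0 (Nat.zero_le n))
  have hparts := Finset.sum_range_by_parts γ β n
  simp only [smul_eq_mul] at hparts
  rw [hparts, mul_add, Finset.mul_sum (Finset.range (n - 1))]
  refine (abs_sub _ _).trans (add_le_add ?_ ((Finset.abs_sum_le_sum_abs _ _).trans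
    (Finset.sum_le_sum fun i hi => ?_)))
  · rw [abs_mul, mul_comm]
    exact mul_le_mul_of_nonneg_right (hB n le_rfl) (abs_nonneg _)
  · rw [abs_mul, mul_comm]
    exact mul_le_mul_of_nonneg_right (hB _ (by rw [Finset.mem_range] at hi; omega)) (abs_nonneg _)

theorem sum_abs_sub_le_integral_abs_deriv {φ φ' : ℝ → ℝ} {a b : ℝ}
    (hφ : ∀ x ∈ Icc a b, HasDerivAt φ (φ' x) x) (hφ' : IntervalIntegrable φ' volume a b)
    {m : ℕ} {x : ℕ → ℝ} (hmono : Monotone x) (hx0 : a ≤ x 0) (hxm : x m ≤ b) :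
    ∑ i ∈ Finset.range m, |φ (x (i + 1)) - φ (x i)| ≤ ∫ y in a..b, |φ' y| := by
  have hx : ∀ i ≤ m, x i ∈ Icc a b := fun i hi =>
    ⟨hx0.trans (hmono (Nat.zero_le i)), (hmono hi).trans hxm⟩
  have hsub : ∀ {u v}, u ∈ Icc a b → v ∈ Icc a b → IntervalIntegrable φ' volume u v :=
    fun hu hv => hφ'.mono_set (uIcc_subset_uIcc (Icc_subset_uIcc hu) (Icc_subset_uIcc hv))
  calc ∑ i ∈ Finset.range m, |φ (x (i + 1)) - φ (x i)|
      ≤ ∑ i ∈ Finset.range m, ∫ y in x i..x (i + 1), |φ' y| := by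
        refine Finset.sum_le_sum fun i hi => ?_
        rw [Finset.mem_range] at hi
        have hi' := hx i hi.le
        have hi'' := hx (i + 1) hi
        have hle : x i ≤ x (i + 1) := hmono (Nat.le_succ i)
        rw [← intervalIntegral.integral_eq_sub_of_hasDerivAt (fun y hy => hφ y ?_)
          (hsub hi' hi'')]
        · exact intervalIntegral.abs_integral_le_integral_abs hle
        · rw [uIcc_of_le hle] at hy
          exact ⟨hi'.1.trans hy.1, hy.2.trans hi''.2⟩
    _ = ∫ y in x 0..x m, |φ' y| :=
        intervalIntegral.sum_integral_adjacent_intervals fun i hi =>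
          (hsub (hx i hi.le) (hx (i + 1) hi)).abs
    _ ≤ ∫ y in a..b, |φ' y| :=
        intervalIntegral.integral_mono_interval hx0 (hmono (Nat.zero_le m)) hxm
          (Eventually.of_forall fun _ => abs_nonneg _) hφ'.abs

theorem IsFinePartition.abs_add_sum_abs_sub_le {a b : ℝ} {δ : ℝ → ℝ} {n : ℕ} {t ξ : ℕ → ℝ}
    (hP : IsFinePartition a b δ n t ξ) (hn : 0 < n) {φ φ' : ℝ → ℝ}
    (hφ : ∀ x ∈ Icc a b, HasDerivAt φ (φ' x) x) (hφ' : IntervalIntegrable φ' volume a b) :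
    |φ (ξ (n - 1))| + ∑ i ∈ Finset.range (n - 1), |φ (ξ (i + 1)) - φ (ξ i)| ≤
      |φ b| + ∫ x in a..b, |φ' x| := by
  set x : ℕ → ℝ := fun i => if i < n then ξ i else b
  have hmono : Monotone x := monotone_nat_of_le_succ fun i => by
    simp only [x]
    split_ifs with h₁ h₂ h₂
    exacts [hP.tag_le_tag (Nat.le_succ i) h₂, (hP.tag_mem_Icc h₁).2, by omega, le_rfl]
  have hvar := sum_abs_sub_le_integral_abs_deriv hφ hφ' hmono (m := n)
    (by simpa [x, hn] using (hP.tag_mem_Icc hn).1) (by simp [x])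
  obtain ⟨m, rfl⟩ := Nat.exists_eq_add_of_lt hn
  simp only [zero_add, Nat.add_sub_cancel] at hvar ⊢
  rw [Finset.sum_range_succ] at hvar
  have hx : ∀ i ≤ m, x i = ξ i := fun i hi => if_pos (by omega)
  have hsum : ∑ i ∈ Finset.range m, |φ (x (i + 1)) - φ (x i)| =
      ∑ i ∈ Finset.range m, |φ (ξ (i + 1)) - φ (ξ i)| :=
    Finset.sum_congr rfl fun i hi => by
      rw [Finset.mem_range] at hi
      rw [hx i hi.le, hx (i + 1) hi]
  rw [hsum, hx m le_rfl, show x (m + 1) = b from if_neg (by omega)] at hvar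
  have := abs_sub_abs_le_abs_sub (φ (ξ m)) (φ b)
  rw [abs_sub_comm (φ (ξ m))] at this
  linarith

theorem abs_hkIntegral_mul_le {h φ φ' : ℝ → ℝ} {a b A : ℝ} (hab : a ≤ b) (hh : HKIntegrable h a b)
    (hhφ : HKIntegrable (fun x => h x * φ x) a b) (hφ : ∀ x ∈ Icc a b, HasDerivAt φ (φ' x) x)
    (hφ' : IntervalIntegrable φ' volume a b) (hA : ∀ c ∈ Icc a b, |hkIntegral h a c| ≤ A) :
    |hkIntegral (fun x => h x * φ x) a b| ≤ A * (|φ b| + ∫ x in a..b, |φ' x|) := by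
  set C := |φ b| + ∫ x in a..b, |φ' x|
  have hC : 0 ≤ C := add_nonneg (abs_nonneg _)
    (intervalIntegral.integral_nonneg hab fun _ _ => abs_nonneg _)
  have hA0 : 0 ≤ A := (abs_nonneg _).trans (hA a ⟨le_rfl, hab⟩)
  refine le_of_forall_pos_le_add fun ε hε => ?_
  set η := ε / (C + 1)
  have hη : 0 < η := by positivity
  obtain ⟨δ₁, hδ₁, H₁⟩ := hkIntegralEq_iff.mp hhφ.hkIntegralEq η hη
  obtain ⟨δ₂, hδ₂, H₂⟩ := hkIntegralEq_iff.mp hh.hkIntegralEq η hη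
  obtain ⟨n, t, ξ, hP₁, hP₂⟩ := exists_isFinePartition₂ hδ₁ hδ₂ hab
  have hpartial : ∀ k ≤ n, |riemannSum h k t ξ| ≤ A + η := fun k hk => by
    have e := abs_riemannSum_sub_hkIntegral_le hh hδ₂ H₂ hP₂ hk
    have := abs_sub_abs_le_abs_sub (riemannSum h k t ξ) (hkIntegral h a (t k))
    linarith [hA _ (hP₂.mem_Icc hk)]
  have hRS : |riemannSum (fun x => h x * φ x) n t ξ| ≤ (A + η) * C := by
    rcases Nat.eq_zero_or_pos n with rfl | hn
    · simpa [riemannSum] using mul_nonneg (by linarith) hC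
    have habel := abs_sum_mul_le_of_abs_partialSum_le (fun i => φ (ξ i))
      (fun i => h (ξ i) * (t (i + 1) - t i)) hpartial
    simp only [← mul_assoc, mul_comm (φ _) (h _)] at habel
    exact habel.trans (mul_le_mul_of_nonneg_left
      (hP₁.abs_add_sum_abs_sub_le hn hφ hφ') (by linarith))
  have e := H₁ n t ξ hP₁
  have := abs_sub_abs_le_abs_sub (hkIntegral (fun x => h x * φ x) a b)
    (riemannSum (fun x => h x * φ x) n t ξ)
  rw [abs_sub_comm] at this
  calc |hkIntegral (fun x => h x * φ x) a b|
      ≤ (A + η) * C + η := by linarith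
    _ = A * C + ε := by rw [← div_mul_cancel₀ ε (by linarith : C + 1 ≠ 0)]; ring

theorem HKIntegrable.exists_continuous_abs_hkIntegral_sub_le {f : ℝ → ℝ} {a b ε : ℝ}
    (hf : HKIntegrable f a b) (hε : 0 < ε) :
    ∃ g : ℝ → ℝ, Continuous g ∧ ∀ c ∈ Icc a b, |hkIntegral (fun x => f x - g x) a c| ≤ ε := by
  obtain ⟨p, hp⟩ := exists_polynomial_near_of_continuousOn a b _ (continuousOn_hkIntegral hf)
    (ε / 2) (half_pos hε)
  refine ⟨fun x => p.derivative.eval x, p.derivative.continuous, fun c hc => ?_⟩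
  have hab : a ≤ b := hc.1.trans hc.2
  have hFa : hkIntegral f a a = 0 := by
    linarith [hkIntegral_add_adjacent hf le_rfl hab]
  have hg : ∫ x in a..c, p.derivative.eval x = p.eval c - p.eval a :=
    intervalIntegral.integral_eq_sub_of_hasDerivAt (fun x _ => p.hasDerivAt x)
      (p.derivative.continuous.intervalIntegrable _ _)
  rw [((hf.mono le_rfl hc.1 hc.2).hkIntegralEq.sub
    (p.derivative.continuous.continuousOn.hkIntegralEq_intervalIntegral hc.1)).hkIntegral_eq hc.1,
    hg]
  have hpc := hp c hc
  have hpa := hp a ⟨le_rfl, hab⟩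
  rw [hFa, abs_lt] at hpa
  rw [abs_lt] at hpc
  rw [abs_le]
  constructor <;> linarith

theorem Function.Periodic.intervalIntegral_comp_sub_eq {F : ℝ → ℝ} {T : ℝ} (hF : Periodic F T)
    (t θ : ℝ) : ∫ x in t..t + T, F (x - θ) = ∫ x in t..t + T, F x := by
  rw [intervalIntegral.integral_comp_sub_right, show t + T - θ = t - θ + T by ring,
    hF.intervalIntegral_add_eq (t - θ) t]

section PoissonKernel

variable {r : ℝ}

def poissonKernelRDeriv (r x : ℝ) : ℝ :=
  -((1 - r ^ 2) * (2 * r * Real.sin x)) / (2 * π * (1 - 2 * r * Real.cos x + r ^ 2) ^ 2)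

theorem poissonKernelR_denom_pos (hr : |r| < 1) (x : ℝ) : 0 < 1 - 2 * r * Real.cos x + r ^ 2 := by
  have hrc : r * Real.cos x ≤ |r| := by
    calc r * Real.cos x ≤ |r * Real.cos x| := le_abs_self _
      _ ≤ |r| := by
        rw [abs_mul]
        exact mul_le_of_le_one_right (abs_nonneg r) (Real.abs_cos_le_one x)
  nlinarith [sq_abs r, abs_nonneg r]

theorem poissonKernelR_pos (hr : |r| < 1) (x : ℝ) : 0 < poissonKernelR r x := by
  have := poissonKernelR_denom_pos hr x
  have : r ^ 2 < 1 := by nlinarith [sq_abs r, abs_nonneg r]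
  unfold poissonKernelR
  positivity

theorem poissonKernelR_le (hr0 : 0 ≤ r) (hr1 : r < 1) (x : ℝ) :
    poissonKernelR r x ≤ 1 / (π * (1 - r)) := by
  have hD : (1 - r) ^ 2 ≤ 1 - 2 * r * Real.cos x + r ^ 2 := by nlinarith [Real.cos_le_one x]
  have h1r : 0 < 1 - r := by linarith
  have hπ := Real.pi_pos
  rw [poissonKernelR, div_le_div_iff₀ (mul_pos (by positivity)
    (poissonKernelR_denom_pos (by rw [abs_of_nonneg hr0]; exact hr1) x)) (by positivity)]
  nlinarith [mul_le_mul_of_nonneg_left hD (by positivity : (0:ℝ) ≤ 2 * π),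
    mul_nonneg (mul_nonneg hπ.le (sq_nonneg (1 - r))) h1r.le]

theorem continuous_poissonKernelR (hr : |r| < 1) : Continuous (poissonKernelR r) :=
  continuous_const.div (by fun_prop) fun x => (mul_pos (by positivity)
    (poissonKernelR_denom_pos hr x)).ne'

theorem continuous_poissonKernelRDeriv (hr : |r| < 1) : Continuous (poissonKernelRDeriv r) :=
  (by fun_prop : Continuous fun x => -((1 - r ^ 2) * (2 * r * Real.sin x))).div (by fun_prop)
    fun x => (mul_pos (by positivity) (pow_pos (poissonKernelR_denom_pos hr x) 2)).ne'

theorem hasDerivAt_poissonKernelR (hr : |r| < 1) (x : ℝ) :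
    HasDerivAt (poissonKernelR r) (poissonKernelRDeriv r x) x := by
  have hD := (poissonKernelR_denom_pos hr x).ne'
  have h := (((Real.hasDerivAt_cos x).const_mul (2 * r)).const_sub 1).add_const (r ^ 2)
    |>.const_mul (2 * π) |> (hasDerivAt_const x (1 - r ^ 2)).div
  refine (h (by positivity)).congr_deriv ?_
  rw [poissonKernelRDeriv]
  field_simp
  ring

theorem periodic_poissonKernelR (r : ℝ) : Function.Periodic (poissonKernelR r) (2 * π) := by
  intro x
  simp [poissonKernelR, Real.cos_add_two_pi]

theorem periodic_poissonKernelRDeriv (r : ℝ) :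
    Function.Periodic (poissonKernelRDeriv r) (2 * π) := by
  intro x
  simp [poissonKernelRDeriv, Real.cos_add_two_pi, Real.sin_add_two_pi]

end PoissonKernel

section PoissonKernelIntegrals

variable {r : ℝ}

/-- Mathlib's Poisson integral formula, applied to the constant function `1`. -/
theorem integral_poissonKernelR (hr : |r| < 1) : ∫ x in (-π)..π, poissonKernelR r x = 1 := by
  have hw : (r : ℂ) ∈ Metric.ball (0 : ℂ) 1 := by simpa using hr
  have h := (diffContOnCl_const (c := (1 : ℂ))).circleAverage_poissonKernel_smul hw
  rw [Real.circleAverage_def] at h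
  have key : ∀ θ : ℝ, (poissonKernel 0 r • fun _ : ℂ => (1 : ℂ)) (circleMap 0 1 θ)
      = ((2 * π * poissonKernelR r θ : ℝ) : ℂ) := by
    intro θ
    have hD := poissonKernelR_denom_pos hr θ
    have hn : ‖circleMap 0 1 θ - r‖ ^ 2 = 1 - 2 * r * Real.cos θ + r ^ 2 := by
      rw [← Complex.normSq_eq_norm_sq, Complex.normSq_apply]
      simp [circleMap, Complex.exp_re, Complex.exp_im]
      nlinarith [Real.sin_sq_add_cos_sq θ]
    change ((poissonKernel 0 r (circleMap 0 1 θ) : ℝ) : ℂ) * 1 = _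
    rw [mul_one, poissonKernel, sub_zero, sub_zero, hn, norm_circleMap_zero, Complex.norm_real,
      Real.norm_eq_abs, sq_abs, sq_abs, one_pow, poissonKernelR]
    congr 1
    field_simp
  simp_rw [key] at h
  rw [intervalIntegral.integral_ofReal, Complex.real_smul, ← Complex.ofReal_mul,
    ← Complex.ofReal_one, Complex.ofReal_inj, intervalIntegral.integral_const_mul] at h
  have hshift := (periodic_poissonKernelR r).intervalIntegral_add_eq (-π) 0
  rw [show -π + 2 * π = π by ring, zero_add] at hshift
  rw [hshift]
  field_simp at h
  linarith

/-- The kernel increases on `[-π, 0]` and decreases on `[0, π]`, so its total variation over a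
period is `2 (P_r(0) - P_r(π))`. -/
theorem integral_abs_poissonKernelRDeriv_le (hr0 : 0 ≤ r) (hr1 : r < 1) :
    ∫ x in (-π)..π, |poissonKernelRDeriv r x| ≤ 2 / (π * (1 - r)) := by
  have hr : |r| < 1 := by rwa [abs_of_nonneg hr0]
  have hcont := continuous_poissonKernelRDeriv hr
  have hftc : ∀ u v,
      ∫ x in u..v, poissonKernelRDeriv r x = poissonKernelR r v - poissonKernelR r u :=
    fun u v => intervalIntegral.integral_eq_sub_of_hasDerivAt
      (fun x _ => hasDerivAt_poissonKernelR hr x) (hcont.intervalIntegrable u v)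
  have hsign : ∀ x, poissonKernelRDeriv r x = -(Real.sin x *
      ((1 - r ^ 2) * (2 * r) / (2 * π * (1 - 2 * r * Real.cos x + r ^ 2) ^ 2))) := fun x => by
    rw [poissonKernelRDeriv]; ring
  have hcoef : ∀ x, 0 ≤ (1 - r ^ 2) * (2 * r) / (2 * π * (1 - 2 * r * Real.cos x + r ^ 2) ^ 2) :=
    fun x => div_nonneg (mul_nonneg (by nlinarith) (by linarith)) (by positivity)
  have hleft :
      ∫ x in (-π)..0, |poissonKernelRDeriv r x| = poissonKernelR r 0 - poissonKernelR r (-π) := by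
    rw [← hftc]
    refine intervalIntegral.integral_congr fun x hx => abs_of_nonneg ?_
    rw [uIcc_of_le (by linarith [Real.pi_pos])] at hx
    rw [hsign]
    exact neg_nonneg.mpr (mul_nonpos_of_nonpos_of_nonneg
      (Real.sin_nonpos_of_nonpos_of_neg_pi_le hx.2 hx.1) (hcoef x))
  have hright :
      ∫ x in (0 : ℝ)..π, |poissonKernelRDeriv r x| = poissonKernelR r 0 - poissonKernelR r π := by
    rw [← neg_sub, ← hftc, ← intervalIntegral.integral_neg]
    refine intervalIntegral.integral_congr fun x hx => abs_of_nonpos ?_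
    rw [uIcc_of_le Real.pi_pos.le] at hx
    rw [hsign]
    exact neg_nonpos.mpr (mul_nonneg (Real.sin_nonneg_of_nonneg_of_le_pi hx.1 hx.2) (hcoef x))
  rw [← intervalIntegral.integral_add_adjacent_intervals (hcont.abs.intervalIntegrable _ _)
    (hcont.abs.intervalIntegrable _ _), hleft, hright]
  have := poissonKernelR_le hr0 hr1 0
  have := poissonKernelR_pos hr π
  have := poissonKernelR_pos hr (-π)
  rw [show 2 / (π * (1 - r)) = 2 * (1 / (π * (1 - r))) by ring]
  linarith

end PoissonKernelIntegrals

section PoissonIntegral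

variable {r : ℝ}

theorem integral_poissonKernelR_comp_sub (hr : |r| < 1) (θ : ℝ) :
    ∫ x in (-π)..π, poissonKernelR r (x - θ) = 1 := by
  have := (periodic_poissonKernelR r).intervalIntegral_comp_sub_eq (-π) θ
  rw [show -π + 2 * π = π by ring] at this
  rw [this, integral_poissonKernelR hr]

theorem abs_integral_mul_poissonKernelR_le {g : ℝ → ℝ} {M : ℝ} (hg : Continuous g)
    (hM : ∀ x ∈ Icc (-π) π, |g x| ≤ M) (hr : |r| < 1) (θ : ℝ) :
    |∫ x in (-π)..π, g x * poissonKernelR r (x - θ)| ≤ M := by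
  have hP : Continuous fun x => poissonKernelR r (x - θ) :=
    (continuous_poissonKernelR hr).comp (continuous_sub_right θ)
  calc |∫ x in (-π)..π, g x * poissonKernelR r (x - θ)|
      ≤ ∫ x in (-π)..π, |g x * poissonKernelR r (x - θ)| :=
        intervalIntegral.abs_integral_le_integral_abs (by linarith [Real.pi_pos])
    _ ≤ ∫ x in (-π)..π, M * poissonKernelR r (x - θ) := by
        refine intervalIntegral.integral_mono_on (by linarith [Real.pi_pos])
          ((hg.mul hP).abs.intervalIntegrable _ _) ((hP.const_smul M).intervalIntegrable _ _)
          fun x hx => ?_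
        rw [abs_mul, abs_of_pos (poissonKernelR_pos hr _)]
        exact mul_le_mul_of_nonneg_right (hM x hx) (poissonKernelR_pos hr _).le
    _ = M := by
        rw [intervalIntegral.integral_const_mul, integral_poissonKernelR_comp_sub hr, mul_one]

theorem abs_hkIntegral_mul_poissonKernelR_le {h : ℝ → ℝ} {A : ℝ} (hr0 : 0 ≤ r) (hr1 : r < 1)
    (θ : ℝ) (hh : HKIntegrable h (-π) π)
    (hhP : HKIntegrable (fun x => h x * poissonKernelR r (x - θ)) (-π) π)
    (hA : ∀ c ∈ Icc (-π) π, |hkIntegral h (-π) c| ≤ A) :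
    |hkIntegral (fun x => h x * poissonKernelR r (x - θ)) (-π) π| ≤ A * (3 / (π * (1 - r))) := by
  have hr : |r| < 1 := by rwa [abs_of_nonneg hr0]
  have hA0 : 0 ≤ A := (abs_nonneg _).trans (hA (-π) ⟨le_rfl, by linarith [Real.pi_pos]⟩)
  have hvar : ∫ x in (-π)..π, |poissonKernelRDeriv r (x - θ)| ≤ 2 / (π * (1 - r)) := by
    have hper : Function.Periodic (fun x => |poissonKernelRDeriv r x|) (2 * π) := fun x => by
      simp only [periodic_poissonKernelRDeriv r x]
    have := hper.intervalIntegral_comp_sub_eq (-π) θ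
    rw [show -π + 2 * π = π by ring] at this
    exact this ▸ integral_abs_poissonKernelRDeriv_le hr0 hr1
  refine (abs_hkIntegral_mul_le (by linarith [Real.pi_pos]) hh hhP
    (fun x _ => (hasDerivAt_poissonKernelR hr (x - θ)).comp_sub_const x θ)
    (((continuous_poissonKernelRDeriv hr).comp (continuous_sub_right θ)).intervalIntegrable _ _)
    hA).trans (mul_le_mul_of_nonneg_left ?_ hA0)
  rw [abs_of_pos (poissonKernelR_pos hr _)]
  have := poissonKernelR_le hr0 hr1 (π - θ)
  rw [show 3 / (π * (1 - r)) = 1 / (π * (1 - r)) + 2 / (π * (1 - r)) by ring]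
  exact add_le_add this hvar

end PoissonIntegral

theorem abs_poissonIntegral_le {f g : ℝ → ℝ} {M A r : ℝ} (hf : HKIntegrable f (-π) π)
    (hg : Continuous g) (hM : ∀ x ∈ Icc (-π) π, |g x| ≤ M)
    (hA : ∀ c ∈ Icc (-π) π, |hkIntegral (fun x => f x - g x) (-π) c| ≤ A) (hr0 : 0 ≤ r)
    (hr1 : r < 1) (θ : ℝ) :
    |poissonIntegral f r θ| ≤ M + A * (3 / (π * (1 - r))) := by
  have hππ : -π ≤ π := by linarith [Real.pi_pos]
  have hr : |r| < 1 := by rwa [abs_of_nonneg hr0]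
  have hP : Continuous fun x => poissonKernelR r (x - θ) :=
    (continuous_poissonKernelR hr).comp (continuous_sub_right θ)
  have hgP : HKIntegralEq (fun x => g x * poissonKernelR r (x - θ)) (-π) π
      (∫ x in (-π)..π, g x * poissonKernelR r (x - θ)) :=
    (hg.mul hP).continuousOn.hkIntegralEq_intervalIntegral hππ
  have hh : HKIntegrable (fun x => f x - g x) (-π) π :=
    ⟨_, hf.hkIntegralEq.sub (hg.continuousOn.hkIntegralEq_intervalIntegral hππ)⟩
  have hgP_bound := abs_integral_mul_poissonKernelR_le hg hM hr θ
  by_cases hfP : HKIntegrable (fun x => f x * poissonKernelR r (x - θ)) (-π) π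
  · have hhP := hfP.hkIntegralEq.sub hgP
    simp only [← sub_mul] at hhP
    have hhP_bound := abs_hkIntegral_mul_poissonKernelR_le hr0 hr1 θ hh ⟨_, hhP⟩ hA
    have hsplit : poissonIntegral f r θ = (∫ x in (-π)..π, g x * poissonKernelR r (x - θ)) +
        hkIntegral (fun x => (f x - g x) * poissonKernelR r (x - θ)) (-π) π := by
      rw [hhP.hkIntegral_eq hππ, poissonIntegral]
      ring
    rw [hsplit]
    exact (abs_add_le _ _).trans (add_le_add hgP_bound hhP_bound)
  · have hA0 : 0 ≤ A := (abs_nonneg _).trans (hA (-π) ⟨le_rfl, hππ⟩)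
    have h1r : 0 < 1 - r := by linarith
    rw [poissonIntegral, hkIntegral, dif_neg hfP, abs_zero]
    exact add_nonneg ((abs_nonneg _).trans hgP_bound) (by positivity)

theorem HKIntegrable.eventually_forall_mul_abs_poissonIntegral_le {f : ℝ → ℝ}
    (hf : HKIntegrable f (-π) π) {ε : ℝ} (hε : 0 < ε) :
    ∀ᶠ r in 𝓝[<] 1, ∀ θ, (1 - r) * |poissonIntegral f r θ| ≤ ε := by
  obtain ⟨g, hg, hA⟩ := hf.exists_continuous_abs_hkIntegral_sub_le (half_pos hε)
  obtain ⟨M, hM⟩ := isCompact_Icc.exists_bound_of_continuousOn (hg.continuousOn (s := Icc (-π) π))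
  have hM0 : 0 ≤ M := (norm_nonneg _).trans (hM (-π) ⟨le_rfl, by linarith [Real.pi_pos]⟩)
  have hr₀ : max 0 (1 - ε / (2 * (M + 1))) < 1 := max_lt one_pos (by
    have : 0 < ε / (2 * (M + 1)) := by positivity
    linarith)
  filter_upwards [Ioo_mem_nhdsLT hr₀] with r hr θ
  have hr0 : 0 ≤ r := (le_max_left _ _).trans hr.1.le
  have h1r : 0 < 1 - r := by linarith [hr.2]
  have hrM : (1 - r) * M ≤ ε / 2 := by
    have : 1 - r < ε / (2 * (M + 1)) := by linarith [le_max_right 0 (1 - ε / (2 * (M + 1))), hr.1]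
    rw [lt_div_iff₀ (by positivity)] at this
    nlinarith
  have hb := abs_poissonIntegral_le hf hg (fun x hx => hM x hx) hA hr0 hr.2 θ
  calc (1 - r) * |poissonIntegral f r θ|
      ≤ (1 - r) * (M + ε / 2 * (3 / (π * (1 - r)))) := mul_le_mul_of_nonneg_left hb h1r.le
    _ = (1 - r) * M + ε / 2 * (3 / π) := by field_simp
    _ ≤ ε := by
        have : 3 / π ≤ 1 := by rw [div_le_one Real.pi_pos]; linarith [Real.pi_gt_three]
        nlinarith

theorem lpNorm_nonneg (p : ℝ) (u : ℝ → ℝ) : 0 ≤ lpNorm p u :=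
  Real.rpow_nonneg (intervalIntegral.integral_nonneg (by linarith [Real.pi_pos])
    fun _ _ => Real.rpow_nonneg (abs_nonneg _) p) _

theorem lpNorm_le_of_abs_le {p B : ℝ} {u : ℝ → ℝ} (hp : 0 < p) (hB : 0 ≤ B)
    (hu : ∀ θ ∈ Icc (-π) π, |u θ| ≤ B) : lpNorm p u ≤ (2 * π) ^ (1 / p) * B := by
  have hπ := Real.pi_pos
  by_cases hi : IntervalIntegrable (fun θ => |u θ| ^ p) volume (-π) π
  · have hle : ∫ θ in (-π)..π, |u θ| ^ p ≤ 2 * π * B ^ p := by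
      calc ∫ θ in (-π)..π, |u θ| ^ p ≤ ∫ _ in (-π)..π, B ^ p :=
            intervalIntegral.integral_mono_on (by linarith) hi intervalIntegrable_const
              fun θ hθ => Real.rpow_le_rpow (abs_nonneg _) (hu θ hθ) hp.le
        _ = 2 * π * B ^ p := by rw [intervalIntegral.integral_const, smul_eq_mul]; ring
    calc lpNorm p u ≤ (2 * π * B ^ p) ^ (1 / p) :=
          Real.rpow_le_rpow (intervalIntegral.integral_nonneg (by linarith)
            fun _ _ => Real.rpow_nonneg (abs_nonneg _) p) hle (by positivity)
      _ = (2 * π) ^ (1 / p) * B := by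
          rw [Real.mul_rpow (by positivity) (Real.rpow_nonneg hB p), ← Real.rpow_mul hB,
            mul_one_div_cancel hp.ne', Real.rpow_one]
  · rw [_root_.lpNorm, intervalIntegral.integral_undef hi, Real.zero_rpow (by positivity)]
    positivity

theorem poisson_lp_little_o_general (p : ℝ) (hp : 1 ≤ p) (f : ℝ → ℝ)
    (hf : HKIntegrable f (-π) π) :
    Tendsto (fun r : ℝ => (1 - r) * lpNorm p (fun θ => poissonIntegral f r θ))
      (𝓝[<] 1) (𝓝 0) := by
  set C := (2 * π) ^ (1 / p)
  have hC : 0 < C := Real.rpow_pos_of_pos (by positivity) _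
  refine Metric.tendsto_nhds.mpr fun ε hε => ?_
  filter_upwards [hf.eventually_forall_mul_abs_poissonIntegral_le (by positivity : 0 < ε / (2 * C)),
    self_mem_nhdsWithin] with r hr hr1
  have h1r : 0 < 1 - r := sub_pos.mpr hr1
  have hbound := lpNorm_le_of_abs_le (p := p) (u := fun θ => poissonIntegral f r θ) (by linarith)
    (by positivity : 0 ≤ ε / (2 * C) / (1 - r)) fun θ _ => (le_div_iff₀' h1r).mpr (hr θ)
  rw [Real.dist_eq, sub_zero, abs_of_nonneg (mul_nonneg h1r.le (lpNorm_nonneg _ _))]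
  calc (1 - r) * lpNorm p (fun θ => poissonIntegral f r θ)
      ≤ (1 - r) * (C * (ε / (2 * C) / (1 - r))) := mul_le_mul_of_nonneg_left hbound h1r.le
    _ = ε / 2 := by field_simp
    _ < ε := half_lt_self hε

/-- For `1 ≤ p < ∞` and `f` 2π-periodic, Henstock–Kurzweil integrable
on `[-π,π]`, one has `‖u_r‖_p = o(1/(1-r))` as `r → 1⁻`. -/
theorem poisson_lp_little_o (p : ℝ) (hp : 1 ≤ p) (f : ℝ → ℝ)
    (hper : Function.Periodic f (2 * π)) (hf : HKIntegrable f (-π) π) :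
    Tendsto (fun r : ℝ => (1 - r) * lpNorm p (fun θ => poissonIntegral f r θ))
      (𝓝[<] 1) (𝓝 0) :=
  poisson_lp_little_o_general p hp f hf
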